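/- Let R be a ring and κ = |R| + ℵ₀. A right R-module L is pure-injective if and only if for every pure embedding ν : N → M of right R-modules with |M| ≤ κ and every f : N → L, there exists g : M → L with g ∘ ν = f. -/

import Mathlib

universe u

/-- A monomorphism `ν : N → M` is pure if for every finitely presented module `C`,
the induced map `Hom(C, M) → Hom(C, M / ν(N))` is surjective. -/
def IsPureMono (R : Type u) [Ring R] {N M : Type u}
    [AddCommGroup N] [Module R N] [AddCommGroup M] [Module R M]
    (ν : N →ₗ[R] M) : Prop :=
  ∀ (C : Type u) [AddCommGroup C] [Module R C], Module.FinitePresentation R C →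
    ∀ h : C →ₗ[R] M ⧸ LinearMap.range ν,
      ∃ g : C →ₗ[R] M, (LinearMap.range ν).mkQ ∘ₗ g = h

/-- `L` is pure-injective: injective with respect to all pure monomorphisms. -/
def PureInjective (R : Type u) [Ring R] (L : Type u)
    [AddCommGroup L] [Module R L] : Prop :=
  ∀ (N M : Type u) [AddCommGroup N] [Module R N] [AddCommGroup M] [Module R M]
    (ν : N →ₗ[R] M), Function.Injective ν → IsPureMono R ν →
      ∀ f : N →ₗ[R] L, ∃ g : M →ₗ[R] L, g ∘ₗ ν = f

/-!
Purity is used in its equational form `Submodule.IsPure`: a finite linear system with constants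
in `P` that is solvable in `M` is already solvable in `P`. Given a pure embedding `N → M` and
`f : N → L`, Zorn's lemma yields a maximal partial map `M →ₗ.[R] L` extending `f` whose domain
`P` is pure. It is total: for `x ∉ P`, a Löwenheim–Skolem closure argument produces a submodule
`S ∋ x` with `#S ≤ κ` such that `P ∩ S` is pure in `S` and `(S + P) / P` is pure in `M / P`
(each finite system needs only finitely many witnesses). The small test extends the map from
`P ∩ S` to `S`, the two maps glue on `P + S`, and `P + S` is again pure.
-/

open Cardinal

universe v

theorem LinearMap.sum_smul_apply_single_one {R M : Type*} [Semiring R] [AddCommMonoid M]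
    [Module R M] {n : ℕ} (ψ : (Fin n → R) →ₗ[R] M) (v : Fin n → R) :
    ∑ j, v j • ψ (Pi.single j 1) = ψ v := by
  simp_rw [← map_smul, ← map_sum]
  congr 1
  ext k
  simp [Pi.single_apply]

namespace Cardinal

theorem mk_iUnion_le_of_le {α : Type u} {ι : Type v} {κ : Cardinal.{u}} (hκ : ℵ₀ ≤ κ)
    (hι : lift.{u} #ι ≤ lift.{v} κ) {f : ι → Set α} (hf : ∀ i, #(f i) ≤ κ) :
    #(⋃ i, f i) ≤ κ := by
  rw [← lift_le.{v}]
  refine (mk_iUnion_le_lift f).trans <|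
    (mul_le_mul' hι (ciSup_le' fun i => lift_le.2 (hf i))).trans ?_
  rw [mul_eq_self (aleph0_le_lift.2 hκ)]

theorem mk_fin_fun_le {α : Type u} {κ : Cardinal.{u}} (hκ : ℵ₀ ≤ κ) (hα : #α ≤ κ) (m : ℕ) :
    #(Fin m → α) ≤ κ := by
  simpa using (power_le_power_right hα).trans (power_nat_le (n := m) hκ)

end Cardinal

namespace Submodule

section Purity

variable {R M : Type*} [Ring R] [AddCommGroup M] [Module R M]

def IsPure (P : Submodule R M) : Prop :=
  ∀ (m n : ℕ) (r : Fin m → Fin n → R) (a : Fin m → M), (∀ i, a i ∈ P) →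
    (∃ x : Fin n → M, ∀ i, ∑ j, r i j • x j = a i) →
    ∃ y : Fin n → M, (∀ j, y j ∈ P) ∧ ∀ i, ∑ j, r i j • y j = a i

theorem exists_forall_mem_of_directed {ι : Type*} [Nonempty ι] {S : ι → Submodule R M}
    (hS : Directed (· ≤ ·) S) {m : ℕ} {a : Fin m → M} (ha : ∀ i, a i ∈ ⨆ k, S k) :
    ∃ k, ∀ i, a i ∈ S k := by
  classical
  choose k hk using fun i => (mem_iSup_of_directed S hS).1 (ha i)
  obtain ⟨K, hK⟩ := hS.finset_le (Finset.univ.image k)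
  exact ⟨K, fun i => hK (k i) (Finset.mem_image_of_mem k (Finset.mem_univ i)) (hk i)⟩

theorem IsPure.iSup_of_directed {ι : Type*} [Nonempty ι] {S : ι → Submodule R M}
    (hS : Directed (· ≤ ·) S) (hpure : ∀ k, (S k).IsPure) : (⨆ k, S k).IsPure := by
  intro m n r a ha hx
  obtain ⟨k, hk⟩ := exists_forall_mem_of_directed hS ha
  obtain ⟨y, hyS, hy⟩ := hpure k m n r a hk hx
  exact ⟨y, fun j => le_iSup S k (hyS j), hy⟩

theorem IsPure.sup_of_isPure_map_mkQ {P S : Submodule R M} (hP : P.IsPure)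
    (hS : (S.map P.mkQ).IsPure) : (P ⊔ S).IsPure := by
  intro m n r a ha ⟨x, hx⟩
  -- Solve modulo `P` inside `S`; the defect of that solution is a system in `P`.
  have haS : ∀ i, P.mkQ (a i) ∈ S.map P.mkQ := fun i => by
    obtain ⟨p, hp, s, hs, hps⟩ := mem_sup.1 (ha i)
    exact ⟨s, hs, by simp [← hps, (Quotient.mk_eq_zero P).2 hp]⟩
  obtain ⟨t, htS, ht⟩ := hS m n r _ haS
    ⟨fun j => P.mkQ (x j), fun i => by simp only [← map_smul, ← map_sum, hx]⟩
  choose w hwS hwt using fun j => mem_map.1 (htS j)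
  have hdefect : ∀ i, ∑ j, r i j • w j - a i ∈ P := fun i => by
    rw [← Quotient.mk_eq_zero, ← mkQ_apply]
    simp only [map_sub, map_sum, map_smul, hwt, ht i, sub_self]
  obtain ⟨p, hpP, hp⟩ := hP m n r _ hdefect
    ⟨fun j => w j - x j, fun i => by simp only [smul_sub, Finset.sum_sub_distrib, hx]⟩
  refine ⟨fun j => w j - p j, fun j => sub_mem (mem_sup_right (hwS j)) (mem_sup_left (hpP j)),
    fun i => ?_⟩
  simp only [smul_sub, Finset.sum_sub_distrib, hp, sub_sub_cancel]

end Purity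

variable {R M : Type u} [Ring R] [AddCommGroup M] [Module R M] {κ : Cardinal.{u}}

theorem IsPure.of_isPureMono {N : Type u} [AddCommGroup N] [Module R N] {ν : N →ₗ[R] M}
    (hν : IsPureMono R ν) : (LinearMap.range ν).IsPure := by
  intro m n r a ha ⟨x, hx⟩
  set P := LinearMap.range ν
  set K := span R (Set.range r)
  have hK : Module.FinitePresentation R ((Fin n → R) ⧸ K) :=
    Module.finitePresentation_of_free_of_surjective K.mkQ K.mkQ_surjective
      (by rw [ker_mkQ]; exact fg_span (Set.finite_range r))
  set φ := Fintype.linearCombination R x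
  have hφ : K ≤ LinearMap.ker (P.mkQ ∘ₗ φ) := span_le.2 <| by
    rintro _ ⟨i, rfl⟩
    simpa [φ, Fintype.linearCombination_apply, hx i] using ha i
  obtain ⟨g, hg⟩ := hν _ hK (K.liftQ _ hφ)
  -- `g` lifts `v ↦ ∑ vⱼ xⱼ mod P`; subtracting it moves the solution `x` into `P`.
  set ψ := φ - g ∘ₗ K.mkQ
  have hψP : ∀ v, ψ v ∈ P := fun v => by
    rw [← Quotient.mk_eq_zero, ← mkQ_apply]
    have hgv := LinearMap.congr_fun hg (K.mkQ v)
    simp only [LinearMap.comp_apply, mkQ_apply, liftQ_apply] at hgv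
    simp only [ψ, LinearMap.sub_apply, LinearMap.comp_apply, mkQ_apply, Quotient.mk_sub, hgv,
      sub_self]
  have hψr : ∀ i, ψ (r i) = a i := fun i => by
    simp [ψ, φ, Fintype.linearCombination_apply, hx i,
      (Quotient.mk_eq_zero K).2 (subset_span ⟨i, rfl⟩)]
  exact ⟨fun j => ψ (Pi.single j 1), fun j => hψP _,
    fun i => (ψ.sum_smul_apply_single_one (r i)).trans (hψr i)⟩

theorem IsPure.isPureMono_subtype {P : Submodule R M} (hP : P.IsPure) :
    IsPureMono R P.subtype := by
  unfold IsPureMono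
  rw [range_subtype]
  intro C _ _ hC h
  obtain ⟨n, m, π, k, hπ, hexact⟩ := Module.FinitePresentation.exists_fin' R C
  choose u hu using fun j => P.mkQ_surjective (h (π (Pi.single j 1)))
  set U := Fintype.linearCombination R u
  have hU : P.mkQ ∘ₗ U = h ∘ₗ π := by
    ext j
    simp [U, hu]
  set r : Fin m → Fin n → R := fun i => k (Pi.single i 1)
  have hUr : ∀ i, U (r i) ∈ P := fun i => by
    rw [← Quotient.mk_eq_zero, ← mkQ_apply, ← LinearMap.comp_apply, hU, LinearMap.comp_apply,
      hexact.apply_apply_eq_zero, map_zero]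
  obtain ⟨y, hyP, hy⟩ := hP m n r (fun i => U (r i)) hUr
    ⟨u, fun i => (Fintype.linearCombination_apply R u (r i)).symm⟩
  -- Correcting `U` by the solution `y ∈ Pⁿ` keeps it a lift of `h ∘ π` and kills `ker π`.
  set V := U - Fintype.linearCombination R y
  have hV : P.mkQ ∘ₗ V = h ∘ₗ π := by
    ext j
    simp [V, U, ← hu, (Quotient.mk_eq_zero P).2 (hyP j)]
  have hVk : LinearMap.range k ≤ LinearMap.ker V := by
    rw [LinearMap.range_le_ker_iff]
    ext i
    simp [V, ← hy i, Fintype.linearCombination_apply, r]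
  refine ⟨(LinearMap.range k).liftQ V hVk ∘ₗ (hexact.linearEquivOfSurjective hπ).symm,
    (LinearMap.cancel_right hπ).1 ?_⟩
  ext j
  simpa using LinearMap.congr_fun hV (Pi.single j 1)

theorem mk_span_le (hκ : ℵ₀ ≤ κ) (hR : #R ≤ κ) {s : Set M} (hs : #s ≤ κ) :
    #(span R s) ≤ κ := by
  classical
  calc #(span R s) = #(Set.range (Finsupp.linearCombination R ((↑) : s → M))) := by
        rw [← LinearMap.coe_range, Finsupp.range_linearCombination, Subtype.range_coe]; rfl
    _ ≤ #(s →₀ R) := mk_range_le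
    _ ≤ #(Finset (s × R)) := mk_le_of_injective (Finsupp.graph_injective _ _)
    _ ≤ #(List (s × R)) := mk_le_of_surjective List.toFinset_surjective
    _ ≤ κ := (mk_list_le_max _).trans (max_le hκ (by simpa using mul_le_of_le hκ hs hR))

theorem exists_closed_of_card_le (hκ : ℵ₀ ≤ κ) (hR : #R ≤ κ)
    (W : ∀ m : ℕ, (Fin m → M) → Set M) (hW : ∀ m a, #(W m a) ≤ κ) (x : M) :
    ∃ S : Submodule R M, x ∈ S ∧ #S ≤ κ ∧
      ∀ m (a : Fin m → M), (∀ i, a i ∈ S) → W m a ⊆ S := by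
  let step (A : Submodule R M) : Submodule R M :=
    span R (A ∪ ⋃ (m : ℕ) (a : Fin m → A), W m ((↑) ∘ a))
  have le_step (A : Submodule R M) : A ≤ step A := fun y hy => subset_span (Or.inl hy)
  have closed_step (A : Submodule R M) (m : ℕ) (a : Fin m → M) (ha : ∀ i, a i ∈ A) :
      W m a ⊆ step A :=
    fun z hz => subset_span (Or.inr (Set.mem_iUnion₂.2 ⟨m, fun i => ⟨a i, ha i⟩, hz⟩))
  have card_step (A : Submodule R M) (hA : #A ≤ κ) : #(step A) ≤ κ :=
    mk_span_le hκ hR <| (mk_union_le _ _).trans <| add_le_of_le hκ hA <|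
      mk_iUnion_le_of_le hκ (by simpa using hκ) fun m =>
        mk_iUnion_le_of_le hκ (by simpa using mk_fin_fun_le hκ hA m) fun _ => hW _ _
  let t : ℕ →o Submodule R M :=
    ⟨fun k => step^[k] (span R {x}), monotone_nat_of_le_succ fun k => by
      simp only [Function.iterate_succ_apply']; exact le_step _⟩
  have card_t (k : ℕ) : #(t k) ≤ κ := by
    induction k with
    | zero => exact mk_span_le hκ hR (by simpa using one_le_aleph0.trans hκ)
    | succ k ih => simpa [t, Function.iterate_succ_apply'] using card_step _ ih
  refine ⟨⨆ k, t k, (mem_iSup_of_chain t x).2 ⟨0, subset_span rfl⟩, ?_, fun m a ha => ?_⟩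
  · rw [← SetLike.coe_sort_coe, coe_iSup_of_chain]
    exact mk_iUnion_le_of_le hκ (by simpa using hκ) fun k => card_t k
  · obtain ⟨k, hk⟩ := exists_forall_mem_of_directed t.monotone.directed_le ha
    refine (closed_step _ m a hk).trans ?_
    have : step (t k) = t (k + 1) := by simp [t, Function.iterate_succ_apply']
    rw [this]
    exact le_iSup t (k + 1)

theorem IsPure.exists_small {P : Submodule R M} (hP : P.IsPure) (hκ : ℵ₀ ≤ κ) (hR : #R ≤ κ)
    (x : M) : ∃ S : Submodule R M, x ∈ S ∧ #S ≤ κ ∧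
      (P.comap S.subtype).IsPure ∧ (S.map P.mkQ).IsPure := by
  classical
  have solve_in_P {m n : ℕ} (r : Fin m → Fin n → R) (a : Fin m → M) : ∃ y : Fin n → M,
      (∀ i, a i ∈ P) → (∃ x : Fin n → M, ∀ i, ∑ j, r i j • x j = a i) →
        (∀ j, y j ∈ P) ∧ ∀ i, ∑ j, r i j • y j = a i := by
    by_cases h : (∀ i, a i ∈ P) ∧ ∃ x : Fin n → M, ∀ i, ∑ j, r i j • x j = a i
    · obtain ⟨y, hy⟩ := hP m n r a h.1 h.2
      exact ⟨y, fun _ _ => hy⟩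
    · exact ⟨0, fun ha hx => (h ⟨ha, hx⟩).elim⟩
  have solve_mod_P {m n : ℕ} (r : Fin m → Fin n → R) (a : Fin m → M) : ∃ y : Fin n → M,
      (∃ x : Fin n → M ⧸ P, ∀ i, ∑ j, r i j • x j = P.mkQ (a i)) →
        ∀ i, ∑ j, r i j • P.mkQ (y j) = P.mkQ (a i) := by
    by_cases h : ∃ x : Fin n → M ⧸ P, ∀ i, ∑ j, r i j • x j = P.mkQ (a i)
    · obtain ⟨x, hx⟩ := h
      choose y hy using fun j => P.mkQ_surjective (x j)
      exact ⟨y, fun _ => by simpa only [hy] using hx⟩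
    · exact ⟨0, fun h' => (h h').elim⟩
  choose yP hyP using @solve_in_P
  choose yQ hyQ using @solve_mod_P
  obtain ⟨S, hxS, hS, hclosed⟩ := exists_closed_of_card_le hκ hR
    (fun m a => ⋃ (n : ℕ) (r : Fin m → Fin n → R), Set.range (yP r a) ∪ Set.range (yQ r a))
    (fun m a => mk_iUnion_le_of_le hκ (by simpa using hκ) fun n =>
      mk_iUnion_le_of_le hκ (by simpa using mk_fin_fun_le hκ (mk_fin_fun_le hκ hR n) m)
        fun _ => ((Set.finite_range _).union (Set.finite_range _)).lt_aleph0.le.trans hκ) x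
  have mem_S {m n : ℕ} (r : Fin m → Fin n → R) {a : Fin m → M} (ha : ∀ i, a i ∈ S)
      (j : Fin n) : yP r a j ∈ S ∧ yQ r a j ∈ S :=
    ⟨hclosed m a ha (Set.mem_iUnion₂.2 ⟨n, r, Or.inl ⟨j, rfl⟩⟩),
      hclosed m a ha (Set.mem_iUnion₂.2 ⟨n, r, Or.inr ⟨j, rfl⟩⟩)⟩
  refine ⟨S, hxS, hS, fun m n r a ha ⟨x, hx⟩ => ?_, fun m n r a ha hx => ?_⟩
  · obtain ⟨hy_mem, hy⟩ := hyP r (fun i => a i) ha ⟨fun j => x j, fun i => by simp [← hx i]⟩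
    exact ⟨fun j => ⟨_, (mem_S r (fun i => (a i).2) j).1⟩, hy_mem,
      fun i => Subtype.ext (by simpa using hy i)⟩
  · choose s hsS hs using fun i => mem_map.1 (ha i)
    refine ⟨fun j => P.mkQ (yQ r s j), fun j => ⟨_, (mem_S r hsS j).2, rfl⟩, fun i => ?_⟩
    rw [hyQ r s (by simpa only [hs] using hx) i, hs]

end Submodule

def PureInjectiveUpTo (R : Type u) [Ring R] (L : Type u) [AddCommGroup L] [Module R L]
    (κ : Cardinal.{u}) : Prop :=
  ∀ (N M : Type u) [AddCommGroup N] [Module R N] [AddCommGroup M] [Module R M]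
    (ν : N →ₗ[R] M), Function.Injective ν → IsPureMono R ν → #M ≤ κ →
      ∀ f : N →ₗ[R] L, ∃ g : M →ₗ[R] L, g ∘ₗ ν = f

section Extension

variable {R L M : Type u} [Ring R] [AddCommGroup L] [Module R L] [AddCommGroup M] [Module R M]
  {κ : Cardinal.{u}}

theorem LinearPMap.exists_le_mem_domain_of_isPure (hκ : ℵ₀ ≤ κ) (hR : #R ≤ κ)
    (hL : PureInjectiveUpTo R L κ) (g : M →ₗ.[R] L) (hg : g.domain.IsPure) (x : M) :
    ∃ g' : M →ₗ.[R] L, g ≤ g' ∧ g'.domain.IsPure ∧ x ∈ g'.domain := by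
  obtain ⟨S, hxS, hS, hpure, hquot⟩ := hg.exists_small hκ hR x
  set Q := g.domain.comap S.subtype
  obtain ⟨h, hh⟩ := hL Q S Q.subtype Q.injective_subtype hpure.isPureMono_subtype hS
    (g.toFun ∘ₗ (S.subtype ∘ₗ Q.subtype).codRestrict g.domain fun q => q.2)
  let h' : M →ₗ.[R] L := ⟨S, h⟩
  have compat (u : g.domain) (v : h'.domain) (huv : (u : M) = v) : g u = h' v :=
    (congrArg g (Subtype.ext huv)).trans
      (LinearMap.congr_fun hh ⟨v, show (v : M) ∈ g.domain from huv ▸ u.2⟩).symm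
  refine ⟨g.sup h' compat, g.left_le_sup _ compat, ?_, ?_⟩
  · rw [LinearPMap.domain_sup]
    exact hg.sup_of_isPure_map_mkQ hquot
  · rw [LinearPMap.domain_sup]
    exact Submodule.mem_sup_right hxS

theorem LinearPMap.exists_le_domain_eq_top_of_isPure (hκ : ℵ₀ ≤ κ) (hR : #R ≤ κ)
    (hL : PureInjectiveUpTo R L κ) (f : M →ₗ.[R] L) (hf : f.domain.IsPure) :
    ∃ g : M →ₗ.[R] L, f ≤ g ∧ g.domain = ⊤ := by
  set Ω := {g : M →ₗ.[R] L | f ≤ g ∧ g.domain.IsPure}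
  have chain_bdd (c) (hc : c ⊆ Ω) (hchain : IsChain (· ≤ ·) c) (y) (hy : y ∈ c) :
      ∃ ub ∈ Ω, ∀ g ∈ c, g ≤ ub := by
    have hdir := hchain.directedOn
    refine ⟨LinearPMap.sSup c hdir, ⟨(hc hy).1.trans (LinearPMap.le_sSup hdir hy), ?_⟩,
      fun _ => LinearPMap.le_sSup hdir⟩
    have : Nonempty c := ⟨⟨y, hy⟩⟩
    rw [LinearPMap.domain_sSup, sSup_image']
    exact .iSup_of_directed (hdir.directed_val.mono_comp _ fun _ _ h => h.1) fun g => (hc g.2).2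
  obtain ⟨g, hfg, hmax⟩ := zorn_le_nonempty₀ Ω chain_bdd f ⟨le_rfl, hf⟩
  refine ⟨g, hfg, Submodule.eq_top_iff'.2 fun x => ?_⟩
  obtain ⟨g', hgg', hg', hx⟩ := g.exists_le_mem_domain_of_isPure hκ hR hL hmax.1.2 x
  exact (hmax.2 ⟨hfg.trans hgg', hg'⟩ hgg').1 hx

end Extension

theorem PureInjective.of_pureInjectiveUpTo {R L : Type u} [Ring R] [AddCommGroup L]
    [Module R L] {κ : Cardinal.{u}} (hκ : ℵ₀ ≤ κ) (hR : #R ≤ κ) (hL : PureInjectiveUpTo R L κ) :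
    PureInjective R L := by
  intro N M _ _ _ _ ν hν hpure f
  let f₀ : M →ₗ.[R] L := ⟨LinearMap.range ν, f ∘ₗ (LinearEquiv.ofInjective ν hν).symm⟩
  obtain ⟨g, hfg, hg⟩ :=
    f₀.exists_le_domain_eq_top_of_isPure hκ hR hL (Submodule.IsPure.of_isPureMono hpure)
  refine ⟨g.toFun ∘ₗ (LinearEquiv.ofTop _ hg).symm, LinearMap.ext fun z => ?_⟩
  have := hfg.2 (x := LinearEquiv.ofInjective ν hν z) (y := ⟨ν z, hg ▸ trivial⟩) (by simp)
  exact this.symm.trans (by simp [f₀])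

/-- A module `L` is pure-injective iff it is injective with respect to all pure
embeddings `ν : N → M` with `|M| ≤ κ = |R| + ℵ₀`. -/
theorem pureInjective_test_small (R : Type u) [Ring R]
    (L : Type u) [AddCommGroup L] [Module R L] :
    PureInjective R L ↔
      ∀ (N M : Type u) [AddCommGroup N] [Module R N] [AddCommGroup M] [Module R M]
        (ν : N →ₗ[R] M), Function.Injective ν → IsPureMono R ν →
          Cardinal.mk M ≤ Cardinal.mk R + Cardinal.aleph0 →
            ∀ f : N →ₗ[R] L, ∃ g : M →ₗ[R] L, g ∘ₗ ν = f :=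
  ⟨fun hL N M _ _ _ _ ν hν hpure _ f => hL N M ν hν hpure f,
    PureInjective.of_pureInjectiveUpTo le_add_self le_self_add⟩
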